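/- For every α ∈ [1,2] there exists an infinite-dimensional real Banach space X such that T(X) = α, t(X) = 1, and T(X*) = 2, where X* denotes the topological dual of X. -/

import Mathlib

/-!
Put `θ = α - 1` and let `X` be the `c₀`-sum of countably many copies of the row space `Y_θ` of
bounded sequences `v` with `θ v ∈ ℓ¹`, normed by `max ‖v‖_∞ (θ ‖v‖_1)`.

In a `c₀`-sum, far-out rows are almost free. A unit vector placed in a row where finitely many
given unit vectors are small is within `1 + ε` of all of them, so `t(X) = 1`. A functional has
norm at most `ε` on all but finitely many rows; if `g` is a norm-one functional living on such a
row `b`, with `g u = 1`, and `x` almost norms the functional `f`, then replacing row `b` of `x` by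
`-u` shows `‖f - g‖ ≥ 2 - 3ε`. Hence `T(X*) = 2`.

Two balls of radius `1 + θ` around `±δ₀` in the first row cover the unit ball of `X`. Conversely,
given finitely many unit centres, put the same vector `v` into every row where one of them nearly
attains its norm, with `‖v‖_∞ ≤ 1`, `θ ‖v‖_1 = 1` and `v` supported beyond almost all the `ℓ¹`
mass of the centres. Since `ℓ¹` norms of almost disjointly supported vectors add up, and the `ℓ¹`
part of a unit vector of `Y_θ` has norm at least `θ`, this point is at distance about `1 + θ`
from every centre.
-/

/-- The thinness index `t(X)` of a normed space. -/
noncomputable def thinness (X : Type*) [NormedAddCommGroup X] : ℝ :=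
  sInf {r : ℝ | 0 < r ∧ ∀ (n : ℕ) (x : Fin n → X), (∀ i, ‖x i‖ = 1) →
    ∀ ε : ℝ, 0 < ε → ∃ y : X, ‖y‖ = 1 ∧ ∀ i, ‖x i - y‖ < r + ε}

/-- The thickness index `T(X)` of a normed space. -/
noncomputable def thickness (X : Type*) [NormedAddCommGroup X] : ℝ :=
  sInf {r : ℝ | 0 < r ∧ ∃ (n : ℕ) (x : Fin n → X), (∀ i, ‖x i‖ = 1) ∧
    Metric.closedBall (0 : X) 1 ⊆ ⋃ i, Metric.closedBall (x i) r}

open Filter Topology Metric ZeroAtInfty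

lemma norm_inv_norm_smul_sub_self {E : Type*} [NormedAddCommGroup E] [NormedSpace ℝ E] {c : E}
    (hc : c ≠ 0) : ‖‖c‖⁻¹ • c - c‖ = |1 - ‖c‖| := by
  have hc' : 0 < ‖c‖ := norm_pos_iff.2 hc
  rw [show ‖c‖⁻¹ • c - c = (‖c‖⁻¹ - 1) • c by rw [sub_smul, one_smul], norm_smul,
    Real.norm_eq_abs, ← abs_of_pos hc', ← abs_mul, abs_of_pos hc', sub_mul,
    inv_mul_cancel₀ hc'.ne', one_mul, abs_sub_comm]

lemma exists_norm_le_one_lt_apply {E : Type*} [NormedAddCommGroup E] [NormedSpace ℝ E]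
    (f : StrongDual ℝ E) {c : ℝ} (h : c < ‖f‖) : ∃ x, ‖x‖ ≤ 1 ∧ c < f x := by
  obtain ⟨x, hx, hfx⟩ := f.exists_lt_apply_of_lt_opNorm h
  rw [Real.norm_eq_abs] at hfx
  rcases le_total 0 (f x) with h0 | h0
  · exact ⟨x, hx.le, by rwa [abs_of_nonneg h0] at hfx⟩
  · exact ⟨-x, by rw [norm_neg]; exact hx.le, by rwa [map_neg, ← abs_of_nonpos h0]⟩

section Indices

variable {X : Type*} [NormedAddCommGroup X]

lemma thickness_le {r : ℝ} (hr : 0 < r) {n : ℕ} (x : Fin n → X) (hx : ∀ i, ‖x i‖ = 1)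
    (hcov : ∀ y : X, ‖y‖ ≤ 1 → ∃ i, ‖y - x i‖ ≤ r) : thickness X ≤ r :=
  csInf_le ⟨0, fun _ h => h.1.le⟩ ⟨hr, n, x, hx, fun y hy => by
    obtain ⟨i, hi⟩ := hcov y (mem_closedBall_zero_iff.1 hy)
    exact Set.mem_iUnion.2 ⟨i, mem_closedBall_iff_norm.2 hi⟩⟩

lemma le_thickness {s : ℝ} {x₀ : X} (hx₀ : ‖x₀‖ = 1)
    (h : ∀ r, 0 < r → ∀ (n : ℕ) (x : Fin n → X), (∀ i, ‖x i‖ = 1) →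
      (∀ y : X, ‖y‖ ≤ 1 → ∃ i, ‖y - x i‖ ≤ r) → s ≤ r) :
    s ≤ thickness X := by
  refine le_csInf ⟨2, two_pos, 1, fun _ => x₀, fun _ => hx₀, fun y hy => ?_⟩
    fun r ⟨hr, n, x, hx, hcov⟩ => h r hr n x hx fun y hy => ?_
  · rw [mem_closedBall_zero_iff] at hy
    exact Set.mem_iUnion.2 ⟨0, mem_closedBall_iff_norm.2 (by linarith [norm_sub_le y x₀])⟩
  · obtain ⟨i, hi⟩ := Set.mem_iUnion.1 (hcov (mem_closedBall_zero_iff.2 hy))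
    exact ⟨i, mem_closedBall_iff_norm.1 hi⟩

lemma thickness_le_two {x : X} (hx : ‖x‖ = 1) : thickness X ≤ 2 :=
  thickness_le two_pos (fun _ : Fin 1 => x) (fun _ => hx) fun y hy =>
    ⟨0, by linarith [norm_sub_le y x]⟩

lemma thinness_le {r : ℝ} (hr : 0 < r)
    (h : ∀ (n : ℕ) (x : Fin n → X), (∀ i, ‖x i‖ = 1) →
      ∀ ε : ℝ, 0 < ε → ∃ y : X, ‖y‖ = 1 ∧ ∀ i, ‖x i - y‖ < r + ε) :
    thinness X ≤ r :=
  csInf_le ⟨0, fun _ h => h.1.le⟩ ⟨hr, h⟩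

/-- Any point `y` of the unit sphere is at distance at least `1` from `x` or from `-x`. -/
lemma one_le_thinness [NormedSpace ℝ X] {x : X} (hx : ‖x‖ = 1) : 1 ≤ thinness X := by
  refine le_csInf ⟨2, two_pos, fun n z hz ε hε => ⟨x, hx, fun i => ?_⟩⟩ ?_
  · linarith [norm_sub_le (z i) x, hz i]
  rintro r ⟨-, hr⟩
  refine le_of_forall_pos_lt_add fun ε hε => ?_
  obtain ⟨y, hy, hxy⟩ := hr 2 ![x, -x] (by simp [hx]) ε hε
  have h₁ : ‖x - y‖ < r + ε := by simpa using hxy 0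
  have h₂ : ‖-x - y‖ < r + ε := by simpa using hxy 1
  have : ‖(2 : ℝ) • y‖ ≤ ‖x - y‖ + ‖-x - y‖ := by
    rw [← norm_neg (x - y), two_smul]
    exact (norm_sub_le _ _).trans_eq' (by abel_nf)
  rw [norm_smul, hy, Real.norm_two, mul_one] at this
  linarith

def HasFarPoints (Y : Type*) [NormedAddCommGroup Y] (s : ℝ) : Prop :=
  ∀ (n : ℕ) (y : Fin n → Y), (∀ j, ‖y j‖ = 1) →
    ∀ ε : ℝ, 0 < ε → ∃ x : Y, ‖x‖ ≤ 1 ∧ ∀ j, s - ε ≤ ‖x - y j‖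

end Indices

noncomputable section

namespace ZeroAtInftyContinuousMap

section Normed

variable {Y : Type*} [NormedAddCommGroup Y]

lemma tendsto_atTop (f : C₀(ℕ, Y)) : Tendsto f atTop (𝓝 0) := by
  simpa [cocompact_eq_cofinite, Nat.cofinite_eq_atTop] using zero_at_infty f

lemma norm_apply_le (f : C₀(ℕ, Y)) (n : ℕ) : ‖f n‖ ≤ ‖f‖ :=
  norm_toBCF_eq_norm (f := f) ▸ f.toBCF.norm_coe_le_norm n

lemma norm_le_of_forall {f : C₀(ℕ, Y)} {C : ℝ} (hC : 0 ≤ C) (h : ∀ n, ‖f n‖ ≤ C) : ‖f‖ ≤ C :=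
  norm_toBCF_eq_norm (f := f) ▸ (f.toBCF.norm_le hC).2 h

lemma exists_lt_norm_apply {f : C₀(ℕ, Y)} {c : ℝ} (h : c < ‖f‖) : ∃ n, c < ‖f n‖ := by
  rw [← norm_toBCF_eq_norm, BoundedContinuousFunction.norm_eq_iSup_norm] at h
  exact exists_lt_of_lt_ciSup h

end Normed

variable {Y : Type*} [NormedAddCommGroup Y] [NormedSpace ℝ Y]

def eval (n : ℕ) : C₀(ℕ, Y) →L[ℝ] Y :=
  LinearMap.mkContinuous
    { toFun := fun f => f n
      map_add' := fun _ _ => rfl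
      map_smul' := fun _ _ => rfl }
    1 fun f => by simpa using norm_apply_le f n

@[simp] lemma eval_apply (n : ℕ) (f : C₀(ℕ, Y)) : eval n f = f n := rfl

lemma norm_eval_le (n : ℕ) : ‖(eval n : C₀(ℕ, Y) →L[ℝ] Y)‖ ≤ 1 :=
  LinearMap.mkContinuous_norm_le _ zero_le_one _

def single (b : ℕ) : Y →L[ℝ] C₀(ℕ, Y) :=
  LinearMap.mkContinuous
    { toFun := fun y => ⟨⟨fun n => if n = b then y else 0, continuous_of_discreteTopology⟩, by
        rw [cocompact_eq_cofinite]
        exact tendsto_nhds_of_eventually_eq <|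
          (Set.finite_singleton b).eventually_cofinite_notMem.mono fun n hn => if_neg hn⟩
      map_add' := fun y z => by ext n; by_cases hn : n = b <;> simp [hn]
      map_smul' := fun c y => by ext n; by_cases hn : n = b <;> simp [hn] }
    1 fun y => norm_le_of_forall (by positivity) fun n => by
      by_cases hn : n = b <;> simp [hn]

lemma single_apply (b : ℕ) (y : Y) (n : ℕ) : single b y n = if n = b then y else 0 := rfl

@[simp] lemma single_apply_self (b : ℕ) (y : Y) : single b y b = y := if_pos rfl

lemma single_apply_of_ne {b n : ℕ} (h : n ≠ b) (y : Y) : single b y n = 0 := if_neg h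

@[simp] lemma norm_single (b : ℕ) (y : Y) : ‖single b y‖ = ‖y‖ :=
  le_antisymm (norm_le_of_forall (norm_nonneg y) fun n => by
      by_cases hn : n = b <;> simp [single_apply, hn])
    (by simpa using norm_apply_le (single b y) b)

lemma sum_single_apply (B : Finset ℕ) (y : ℕ → Y) (n : ℕ) :
    (∑ b ∈ B, single b (y b)) n = if n ∈ B then y n else 0 := by
  rw [← eval_apply, map_sum]
  simp [single_apply, Finset.sum_ite_eq]

lemma norm_sum_single_le {B : Finset ℕ} {y : ℕ → Y} {C : ℝ} (hC : 0 ≤ C)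
    (hy : ∀ b ∈ B, ‖y b‖ ≤ C) : ‖∑ b ∈ B, single b (y b)‖ ≤ C :=
  norm_le_of_forall hC fun n => by
    rw [sum_single_apply]
    split_ifs with hn
    exacts [hy n hn, by simpa using hC]

lemma card_mul_le_norm (f : StrongDual ℝ C₀(ℕ, Y)) {ε : ℝ} {B : Finset ℕ}
    (hB : ∀ b ∈ B, ε < ‖f ∘L single b‖) : B.card * ε ≤ ‖f‖ := by
  have : ∀ b, ∃ y : Y, ‖y‖ ≤ 1 ∧ (b ∈ B → ε < f (single b y)) := fun b => by
    by_cases hb : b ∈ B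
    · obtain ⟨y, hy, hfy⟩ := exists_norm_le_one_lt_apply _ (hB b hb)
      exact ⟨y, hy, fun _ => hfy⟩
    · exact ⟨0, by simp, fun h => absurd h hb⟩
  choose y hy hfy using this
  calc B.card * ε = ∑ b ∈ B, ε := by simp
    _ ≤ ∑ b ∈ B, f (single b (y b)) := Finset.sum_le_sum fun b hb => (hfy b hb).le
    _ = f (∑ b ∈ B, single b (y b)) := (map_sum f _ B).symm
    _ ≤ ‖f‖ * ‖∑ b ∈ B, single b (y b)‖ := (le_abs_self _).trans (f.le_opNorm _)
    _ ≤ ‖f‖ := mul_le_of_le_one_right (norm_nonneg f)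
      (norm_sum_single_le zero_le_one fun b _ => hy b)

lemma eventually_norm_comp_single_le (f : StrongDual ℝ C₀(ℕ, Y)) {ε : ℝ} (hε : 0 < ε) :
    ∀ᶠ b in atTop, ‖f ∘L single b‖ ≤ ε := by
  have hfin : {b | ε < ‖f ∘L single b‖}.Finite := by
    by_contra hinf
    obtain ⟨m, hm⟩ := exists_nat_gt (‖f‖ / ε)
    obtain ⟨B, hB, rfl⟩ := Set.Infinite.exists_subset_card_eq hinf m
    have := card_mul_le_norm f fun b hb => hB hb
    rw [div_lt_iff₀ hε] at hm
    linarith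
  simpa [← Nat.cofinite_eq_atTop] using hfin.eventually_cofinite_notMem

lemma norm_comp_eval {φ : StrongDual ℝ Y} {u : Y} (hφ : ‖φ‖ = 1) (hu : ‖u‖ = 1) (hφu : φ u = 1)
    (b : ℕ) : ‖φ ∘L eval b‖ = 1 := by
  refine le_antisymm ?_ (by simpa [hu, hφu] using (φ ∘L eval b).le_opNorm (single b u))
  calc ‖φ ∘L eval b‖ ≤ ‖φ‖ * ‖(eval b : C₀(ℕ, Y) →L[ℝ] Y)‖ := φ.opNorm_comp_le _
    _ ≤ 1 := by rw [hφ, one_mul]; exact norm_eval_le b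

variable [Nontrivial Y]

theorem thinness_eq_one : thinness C₀(ℕ, Y) = 1 := by
  obtain ⟨u, hu⟩ := exists_norm_eq Y zero_le_one
  refine le_antisymm (thinness_le one_pos fun n x hx ε hε => ?_)
    (one_le_thinness (x := single 0 u) (by simp [hu]))
  obtain ⟨b, hb⟩ := (eventually_all.2 fun i => (x i).tendsto_atTop.norm.eventually
    (eventually_lt_nhds (by simpa using hε))).exists
  refine ⟨single b u, by simp [hu], fun i => ?_⟩
  refine lt_of_le_of_lt (norm_le_of_forall (C := 1 + ‖x i b‖) (by positivity) fun m => ?_)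
    (by linarith [hb i])
  rcases eq_or_ne m b with rfl | hm
  · simpa [hu, add_comm] using norm_sub_le (x i m) u
  · simpa [single_apply_of_ne hm, ← hx i] using (norm_apply_le (x i) m).trans (by simp)

theorem thickness_le_thickness : thickness C₀(ℕ, Y) ≤ thickness Y := by
  obtain ⟨u, hu⟩ := exists_norm_eq Y zero_le_one
  refine le_thickness hu fun r hr n c hc hcov =>
    thickness_le hr (fun i => single 0 (c i)) (by simp [hc]) fun f hf => ?_
  have hr1 : 1 ≤ r := by
    obtain ⟨i, hi⟩ := hcov 0 (by simp)
    simpa [hc i] using hi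
  obtain ⟨i, hi⟩ := hcov (f 0) ((norm_apply_le f 0).trans hf)
  refine ⟨i, norm_le_of_forall hr.le fun m => ?_⟩
  rcases eq_or_ne m 0 with rfl | hm
  · simpa using hi
  · simpa [single_apply_of_ne hm] using ((norm_apply_le f m).trans hf).trans hr1

theorem le_thickness_of_hasFarPoints {s : ℝ} (hY : HasFarPoints Y s) :
    s ≤ thickness C₀(ℕ, Y) := by
  obtain ⟨u, hu⟩ := exists_norm_eq Y zero_le_one
  refine le_thickness (x₀ := single 0 u) (by simp [hu]) fun r hr n c hc hcov => ?_
  refine le_of_forall_pos_le_add fun ε hε => ?_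
  choose b hb using fun i => exists_lt_norm_apply (f := c i) (c := max (1 - ε / 2) 0)
    (by rw [hc i]; exact max_lt (by linarith) one_pos)
  have hcb (i : Fin n) : c i (b i) ≠ 0 := norm_pos_iff.1 (max_lt_iff.1 (hb i)).2
  obtain ⟨x, hx, hfar⟩ := hY n (fun i => ‖c i (b i)‖⁻¹ • c i (b i))
    (fun i => norm_smul_inv_norm (hcb i)) (ε / 2) (by positivity)
  obtain ⟨i, hi⟩ := hcov (∑ b' ∈ Finset.univ.image b, single b' x)
    (norm_sum_single_le zero_le_one fun _ _ => hx)
  have hrow : ‖x - c i (b i)‖ ≤ r := by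
    have := norm_apply_le (∑ b' ∈ Finset.univ.image b, single b' x - c i) (b i)
    rw [sub_apply, sum_single_apply, if_pos (Finset.mem_image_of_mem b (Finset.mem_univ i))]
      at this
    exact this.trans hi
  have hnormalize : ‖c i (b i) - ‖c i (b i)‖⁻¹ • c i (b i)‖ ≤ ε / 2 := by
    have hle : ‖c i (b i)‖ ≤ 1 := (norm_apply_le (c i) (b i)).trans (hc i).le
    rw [norm_sub_rev, norm_inv_norm_smul_sub_self (hcb i), abs_of_nonneg (by linarith)]
    linarith [(max_lt_iff.1 (hb i)).1]
  linarith [hfar i, norm_sub_le_norm_sub_add_norm_sub x (c i (b i)) (‖c i (b i)‖⁻¹ • c i (b i))]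

theorem thickness_dual_eq_two : thickness (StrongDual ℝ C₀(ℕ, Y)) = 2 := by
  obtain ⟨u, hu⟩ := exists_norm_eq Y zero_le_one
  obtain ⟨φ, hφ, hφu⟩ := exists_dual_vector ℝ u (by simp [hu])
  replace hφu : φ u = 1 := by simpa [hu] using hφu
  have hg := norm_comp_eval hφ hu hφu
  refine le_antisymm (thickness_le_two (hg 0)) (le_thickness (hg 0) fun r hr n f hf hcov => ?_)
  refine le_of_forall_pos_le_add fun ε hε => ?_
  obtain ⟨b, hb⟩ := (eventually_all.2 fun i =>
    eventually_norm_comp_single_le (f i) (ε := ε / 3) (by positivity)).exists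
  obtain ⟨i, hi⟩ := hcov _ (hg b).le
  obtain ⟨x, hx, hfx⟩ := exists_norm_le_one_lt_apply (f i) (c := 1 - ε / 3) (by linarith [hf i])
  -- `x'` is `-x` off row `b` and `u` on it
  set x' := single b (x b + u) - x
  have hx' : ‖x'‖ ≤ 1 := norm_le_of_forall zero_le_one fun m => by
    rcases eq_or_ne m b with rfl | hm
    · simp [x', hu]
    · simpa [x', single_apply_of_ne hm] using (norm_apply_le x m).trans hx
  have hxb : ‖x b + u‖ ≤ 2 := by linarith [norm_add_le (x b) u, (norm_apply_le x b).trans hx]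
  have hrow : f i (single b (x b + u)) ≤ 2 * (ε / 3) :=
    calc f i (single b (x b + u)) ≤ ‖f i ∘L single b‖ * ‖x b + u‖ :=
          (le_abs_self _).trans ((f i ∘L single b).le_opNorm _)
      _ ≤ ε / 3 * 2 := mul_le_mul (hb i) hxb (norm_nonneg _) (by positivity)
      _ = 2 * (ε / 3) := mul_comm _ _
  have hval : (φ ∘L eval b - f i) x' = 1 - f i (single b (x b + u)) + f i x := by
    have hx'b : x' b = u := by simp [x']
    rw [_root_.sub_apply, ContinuousLinearMap.comp_apply, eval_apply, hx'b, hφu,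
      map_sub]
    ring
  calc 2 ≤ (φ ∘L eval b - f i) x' + ε := by linarith
    _ ≤ ‖φ ∘L eval b - f i‖ * ‖x'‖ + ε := by
      gcongr; exact (le_abs_self _).trans ((φ ∘L eval b - f i).le_opNorm x')
    _ ≤ r + ε := by
      have := mul_le_of_le_one_right (norm_nonneg (φ ∘L eval b - f i)) hx'
      linarith

theorem not_finiteDimensional : ¬ FiniteDimensional ℝ C₀(ℕ, Y) := by
  intro _
  obtain ⟨u, hu⟩ := exists_ne (0 : Y)
  refine Module.Finite.not_linearIndependent_of_infinite (R := ℝ) (fun b => single b u) ?_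
  rw [linearIndependent_iff']
  intro s g hg i hi
  have := congrArg (eval i) hg
  simp only [← map_smul, map_zero, eval_apply] at this
  rw [sum_single_apply (y := fun b => g b • u), if_pos hi, smul_eq_zero] at this
  exact this.resolve_right hu

end ZeroAtInftyContinuousMap

open scoped lp ENNReal

namespace lp

variable {E : Type*} [NormedAddCommGroup E]

lemma summable_norm_of_one (f : ℓ¹(ℕ, E)) : Summable fun k => ‖f k‖ := by
  simpa using (lp.memℓp f).summable (by simp)

lemma norm_eq_tsum_norm (f : ℓ¹(ℕ, E)) : ‖f‖ = ∑' k, ‖f k‖ := by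
  rw [lp.norm_eq_tsum_rpow (by simp)]
  simp

lemma eventually_norm_add_norm_le_norm_sub (w : ℓ¹(ℕ, E)) {ε : ℝ} (hε : 0 < ε) :
    ∀ᶠ K in atTop, ∀ x : ℓ¹(ℕ, E), (∀ k < K, x k = 0) → ‖x‖ + ‖w‖ - ε ≤ ‖x - w‖ := by
  have hw := summable_norm_of_one w
  filter_upwards [(tendsto_sum_nat_add fun k => ‖w k‖).eventually (gt_mem_nhds (half_pos hε))]
    with K hK x hx
  have hx' := summable_norm_of_one x
  have hxw := summable_norm_of_one (x - w)
  have hsplit := fun (g : ℕ → ℝ) (hg : Summable g) => (hg.sum_add_tsum_nat_add K).symm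
  rw [norm_eq_tsum_norm, norm_eq_tsum_norm, norm_eq_tsum_norm, hsplit _ hx', hsplit _ hw,
    hsplit _ hxw]
  have hhead : ∑ k ∈ Finset.range K, ‖(x - w) k‖ = ∑ k ∈ Finset.range K, ‖w k‖ :=
    Finset.sum_congr rfl fun k hk => by simp [hx k (Finset.mem_range.1 hk)]
  have hx0 : ∑ k ∈ Finset.range K, ‖x k‖ = 0 :=
    Finset.sum_eq_zero fun k hk => by simp [hx k (Finset.mem_range.1 hk)]
  have htail : ∑' k, ‖x (k + K)‖ - ∑' k, ‖w (k + K)‖ ≤ ∑' k, ‖(x - w) (k + K)‖ := by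
    rw [← Summable.tsum_sub ((summable_nat_add_iff K).2 hx') ((summable_nat_add_iff K).2 hw)]
    exact Summable.tsum_le_tsum (fun k => by simpa using norm_sub_norm_le (x (k + K)) (w (k + K)))
      (((summable_nat_add_iff K).2 hx').sub ((summable_nat_add_iff K).2 hw))
      ((summable_nat_add_iff K).2 hxw)
  linarith

end lp

/-- `(v, w) ↦ θ • v - w`, read coordinatewise. -/
def rowDefect (θ : ℝ) : ℓ^∞(ℕ, ℝ) × ℓ¹(ℕ, ℝ) →L[ℝ] (ℕ → ℝ) :=
  ContinuousLinearMap.pi fun k =>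
    θ • (lp.evalCLM ℝ (fun _ : ℕ => ℝ) ∞ k ∘L .fst ℝ _ _) -
      lp.evalCLM ℝ (fun _ : ℕ => ℝ) 1 k ∘L .snd ℝ _ _

/-- The bounded sequences `v` with `θ v ∈ ℓ¹`, normed by `max ‖v‖_∞ (θ ‖v‖_1)`: the pairs `(v, θ v)`
form a closed subspace of `ℓ^∞ × ℓ¹`, whose product norm is exactly this maximum. -/
abbrev RowSpace (θ : ℝ) : Submodule ℝ (ℓ^∞(ℕ, ℝ) × ℓ¹(ℕ, ℝ)) := (rowDefect θ).ker

namespace RowSpace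

variable {θ : ℝ}

lemma mem_iff {p : ℓ^∞(ℕ, ℝ) × ℓ¹(ℕ, ℝ)} : p ∈ RowSpace θ ↔ ∀ k, θ * p.1 k = p.2 k := by
  simp [rowDefect, funext_iff, sub_eq_zero, lp.evalCLM]

lemma norm_eq (y : RowSpace θ) : ‖y‖ = max ‖y.1.1‖ ‖y.1.2‖ := rfl

lemma mul_norm_le_norm_snd (hθ : 0 ≤ θ) (hθ1 : θ ≤ 1) (y : RowSpace θ) : θ * ‖y‖ ≤ ‖y.1.2‖ := by
  have hfst : ‖θ • y.1.1‖ ≤ ‖y.1.2‖ := lp.norm_le_of_forall_le (norm_nonneg _) fun k => by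
    rw [lp.coeFn_smul, Pi.smul_apply, smul_eq_mul, mem_iff.1 y.2 k]
    exact lp.norm_apply_le_norm (by simp) _ k
  rw [lp.norm_const_smul (by simp), Real.norm_eq_abs, abs_of_nonneg hθ] at hfst
  rw [norm_eq, mul_max_of_nonneg _ _ hθ]
  exact max_le hfst (mul_le_of_le_one_left (norm_nonneg _) hθ1)

def indicator (θ : ℝ) (S : Finset ℕ) (a : ℝ) : RowSpace θ :=
  ⟨(∑ k ∈ S, lp.single ∞ k a, ∑ k ∈ S, lp.single 1 k (θ * a)), mem_iff.2 fun k => by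
    simp only [lp.coeFn_sum, lp.coeFn_single, Finset.sum_apply, Finset.sum_pi_single]
    split_ifs <;> simp⟩

lemma indicator_fst_apply (S : Finset ℕ) (a : ℝ) (k : ℕ) :
    (indicator θ S a).1.1 k = if k ∈ S then a else 0 := by
  simp only [indicator, lp.coeFn_sum, lp.coeFn_single, Finset.sum_apply, Finset.sum_pi_single]

lemma indicator_snd_apply (S : Finset ℕ) (a : ℝ) (k : ℕ) :
    (indicator θ S a).1.2 k = if k ∈ S then θ * a else 0 := by
  simp only [indicator, lp.coeFn_sum, lp.coeFn_single, Finset.sum_apply, Finset.sum_pi_single]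

lemma norm_indicator_fst_le (S : Finset ℕ) (a : ℝ) : ‖(indicator θ S a).1.1‖ ≤ |a| :=
  lp.norm_le_of_forall_le (abs_nonneg a) fun k => by
    rw [indicator_fst_apply]; split_ifs <;> simp

lemma norm_indicator_snd (S : Finset ℕ) (a : ℝ) :
    ‖(indicator θ S a).1.2‖ = S.card * |θ * a| := by
  simpa [indicator] using lp.norm_sum_single (p := 1) (by simp) (fun _ => θ * a) S

abbrev e₀ (θ : ℝ) : RowSpace θ := indicator θ {0} 1

lemma norm_e₀ (hθ : 0 ≤ θ) (hθ1 : θ ≤ 1) : ‖e₀ θ‖ = 1 := by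
  rw [norm_eq, norm_indicator_snd]
  simp [indicator, abs_of_nonneg hθ, hθ1]

instance : Nontrivial (RowSpace θ) :=
  ⟨⟨e₀ θ, 0, fun h => by
    simpa [indicator_fst_apply] using congrArg (fun y : RowSpace θ => y.1.1 0) h⟩⟩

lemma norm_sub_e₀_le (hθ : 0 ≤ θ) {y : RowSpace θ} (hy : ‖y‖ ≤ 1) (h0 : 0 ≤ y.1.1 0) :
    ‖y - e₀ θ‖ ≤ 1 + θ := by
  have hy1 : ‖y.1.1‖ ≤ 1 := (le_max_left _ _).trans hy
  have hy2 : ‖y.1.2‖ ≤ 1 := (le_max_right _ _).trans hy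
  rw [norm_eq]
  refine max_le ((lp.norm_le_of_forall_le zero_le_one fun k => ?_).trans (by linarith)) ?_
  · have hk := (lp.norm_apply_le_norm (by simp) y.1.1 k).trans hy1
    simp only [Submodule.coe_sub, Prod.fst_sub, lp.coeFn_sub, Pi.sub_apply, indicator_fst_apply,
      Finset.mem_singleton]
    rcases eq_or_ne k 0 with rfl | hk0
    · rw [Real.norm_eq_abs] at hk ⊢
      rw [if_pos rfl, abs_le]
      constructor <;> linarith [le_abs_self (y.1.1 0)]
    · simpa [hk0] using hk
  · calc ‖(y - e₀ θ).1.2‖ = ‖y.1.2 - (e₀ θ).1.2‖ := rfl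
      _ ≤ ‖y.1.2‖ + ‖(e₀ θ).1.2‖ := norm_sub_le _ _
      _ ≤ 1 + θ := by
        rw [norm_indicator_snd]
        simp only [Finset.card_singleton, Nat.cast_one, one_mul, mul_one, abs_of_nonneg hθ]
        linarith

theorem thickness_le (hθ : 0 ≤ θ) (hθ1 : θ ≤ 1) : thickness (RowSpace θ) ≤ 1 + θ := by
  refine _root_.thickness_le (by linarith) ![e₀ θ, -e₀ θ]
    (fun i => by fin_cases i <;> simpa using norm_e₀ hθ hθ1) fun y hy => ?_
  rcases le_total 0 (y.1.1 0) with h0 | h0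
  · exact ⟨0, norm_sub_e₀_le hθ hy h0⟩
  · refine ⟨1, ?_⟩
    have := norm_sub_e₀_le hθ (y := -y) (by rwa [norm_neg]) (by simpa using h0)
    rwa [← norm_neg, neg_sub', neg_neg] at this

/-- The value `(θ N)⁻¹` spread over `N = ⌈θ⁻¹⌉₊` coordinates keeps the sup norm `≤ 1` while the
`ℓ¹` part gets norm one. -/
lemma exists_norm_snd_eq_one_vanishing_below (hθ : 0 < θ) (K : ℕ) :
    ∃ x : RowSpace θ, ‖x‖ ≤ 1 ∧ ‖x.1.2‖ = 1 ∧ ∀ k < K, x.1.2 k = 0 := by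
  set N := ⌈θ⁻¹⌉₊
  have hN : 1 ≤ θ * N := by
    rw [← mul_inv_cancel₀ hθ.ne']
    exact mul_le_mul_of_nonneg_left (Nat.le_ceil _) hθ.le
  have hθN : 0 < θ * N := by linarith
  have hN0 : (N : ℝ) ≠ 0 := (pos_of_mul_pos_right hθN hθ.le).ne'
  have hsnd : ‖(indicator θ (Finset.Ico K (K + N)) (θ * N)⁻¹).1.2‖ = 1 := by
    rw [norm_indicator_snd, Nat.card_Ico, Nat.add_sub_cancel_left,
      abs_of_pos (mul_pos hθ (inv_pos.2 hθN))]
    field_simp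
  refine ⟨indicator θ (Finset.Ico K (K + N)) (θ * N)⁻¹, ?_, hsnd, fun k hk => ?_⟩
  · rw [norm_eq, hsnd]
    refine max_le ((norm_indicator_fst_le _ _).trans ?_) le_rfl
    rw [abs_of_pos (inv_pos.2 hθN)]
    exact inv_le_one_of_one_le₀ hN
  · simp [indicator_snd_apply, hk]

theorem hasFarPoints (hθ : 0 ≤ θ) (hθ1 : θ ≤ 1) : HasFarPoints (RowSpace θ) (1 + θ) := by
  intro n y hy ε hε
  rcases hθ.eq_or_lt with rfl | hθ
  · exact ⟨0, by simp, fun j => by simp [hy j, hε.le]⟩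
  obtain ⟨K, hK⟩ := (eventually_all.2 fun j =>
    lp.eventually_norm_add_norm_le_norm_sub (y j).1.2 hε).exists
  obtain ⟨x, hx, hx1, hxK⟩ := exists_norm_snd_eq_one_vanishing_below hθ K
  refine ⟨x, hx, fun j => ?_⟩
  have := mul_norm_le_norm_snd hθ.le hθ1 (y j)
  rw [hy j, mul_one] at this
  calc 1 + θ - ε ≤ ‖x.1.2‖ + ‖(y j).1.2‖ - ε := by rw [hx1]; linarith
    _ ≤ ‖x.1.2 - (y j).1.2‖ := hK j x.1.2 hxK
    _ ≤ ‖x - y j‖ := le_max_right _ _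

end RowSpace

end

theorem exists_banach_thin_with_any_thickness (α : ℝ) (h1 : 1 ≤ α) (h2 : α ≤ 2) :
    ∃ (X : Type) (_ : NormedAddCommGroup X) (_ : NormedSpace ℝ X),
      CompleteSpace X ∧ ¬ FiniteDimensional ℝ X ∧
      thickness X = α ∧ thinness X = 1 ∧ thickness (StrongDual ℝ X) = 2 := by
  obtain ⟨θ, hθ, hθ1, rfl⟩ : ∃ θ, 0 ≤ θ ∧ θ ≤ 1 ∧ α = 1 + θ :=
    ⟨α - 1, by linarith, by linarith, by ring⟩
  open ZeroAtInftyContinuousMap in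
  refine ⟨C₀(ℕ, RowSpace θ), inferInstance, inferInstance, inferInstance, not_finiteDimensional,
    le_antisymm (thickness_le_thickness.trans (RowSpace.thickness_le hθ hθ1))
      (le_thickness_of_hasFarPoints (RowSpace.hasFarPoints hθ hθ1)),
    thinness_eq_one, thickness_dual_eq_two⟩
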